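/- On every cycle C of π there is exactly one leader, i.e., exactly one element i ∈ C such that the best b-staircase from i exists and its middle is the minimum element of C. -/

import Mathlib

attribute [local instance] Classical.propDecidable

variable {n : ℕ}

/-- The first element of `E` encountered strictly after `x` when following `π` along its cycle
(`x` itself if no element of `E` is reachable).  For `E = E_r` this is the map `π_r`. -/
noncomputable def nextIn (π : Equiv.Perm (Fin n)) (E : Finset (Fin n)) (x : Fin n) : Fin n :=
  if h : ∃ k, 0 < k ∧ (⇑π)^[k] x ∈ E then (⇑π)^[Nat.find h] x else x

/-- `b`-fold iteration of `nextIn`; for `E = E_r` this is `π_r^b`. -/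
noncomputable def stepB (π : Equiv.Perm (Fin n)) (b : ℕ) (E : Finset (Fin n)) (x : Fin n) :
    Fin n :=
  (nextIn π E)^[b] x

/-- `level π b r` is the set `E_{r+1}` (0-indexed): `level π b 0 = E_1 = [n]`, and `E_{r+1}`
consists of the elements `i` of `E_r` with `i < π_r^k(i)` for all `k ∈ {−b,…,b} \ {0}`. -/
noncomputable def level (π : Equiv.Perm (Fin n)) (b : ℕ) : ℕ → Finset (Fin n)
  | 0 => Finset.univ
  | r + 1 =>
    (level π b r).filter fun i =>
      (∀ k ∈ Finset.Icc 1 b, i < (nextIn π (level π b r))^[k] i) ∧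
      (∀ k ∈ Finset.Icc 1 b, i < (nextIn π⁻¹ (level π b r))^[k] i)

/-- The cycle of `π` containing `x`, as a finset. -/
def cycleOfF (π : Equiv.Perm (Fin n)) (x : Fin n) : Finset (Fin n) :=
  (Finset.range n).image fun k => (⇑π)^[k] x

/-- `iSeq π b i k` is the element `i_{k+1}` of the `b`-staircase from `i`:
`i_1 = i` and `i_{k+1} = π_k^b(i_k)`. -/
noncomputable def iSeq (π : Equiv.Perm (Fin n)) (b : ℕ) (i : Fin n) : ℕ → Fin n
  | 0 => i
  | k + 1 => stepB π b (level π b k) (iSeq π b i k)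

/-- `jSeq π b r m q` is the element `j_{r+1-q}` of the descending part of the `b`-staircase of
size `r` with middle `m`: `j_{r+1} = m` and `j_k = π_k^b(j_{k+1})`. -/
noncomputable def jSeq (π : Equiv.Perm (Fin n)) (b : ℕ) (r : ℕ) (m : Fin n) : ℕ → Fin n
  | 0 => m
  | q + 1 => stepB π b (level π b (r - (q + 1))) (jSeq π b r m q)

/-- The sequence `(i = i_1, …, i_{r+1} = m = j_{r+1}, j_r, …, j_1 = i')` is a `b`-staircase of
size `r` from `i`: `i_k, j_k ∈ E_k` for all `k ∈ [r+1]`. -/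
def IsStaircase (π : Equiv.Perm (Fin n)) (b r : ℕ) (i : Fin n) : Prop :=
  ∀ k ≤ r, iSeq π b i k ∈ level π b k ∧
    jSeq π b r (iSeq π b i r) k ∈ level π b (r - k)

/-- An almost `b`-staircase of size `r` from `i`: membership `i_k, j_k ∈ E_k` is required only
for `k ∈ [r]`. -/
def IsAlmost (π : Equiv.Perm (Fin n)) (b r : ℕ) (i : Fin n) : Prop :=
  (∀ k < r, iSeq π b i k ∈ level π b k) ∧
  (∀ q, 1 ≤ q → q ≤ r → jSeq π b r (iSeq π b i r) q ∈ level π b (r - q))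

/-- The `b`-staircase of size `r` from `i` is the best `b`-staircase from `i`: there is no
proper (i.e. with `|E_{r+1} ∩ C| > b`, where `C` is the cycle of `i`) almost `b`-staircase of
size `r+1` from `i`. -/
def IsBest (π : Equiv.Perm (Fin n)) (b r : ℕ) (i : Fin n) : Prop :=
  IsStaircase π b r i ∧
    ¬ (IsAlmost π b (r + 1) i ∧ b < ((level π b r) ∩ cycleOfF π i).card)

/-- Fich et al.'s (`b = 1`) notion: the staircase of size `r` from `i` is the best staircase
from `i`, where an almost staircase of size `r+1` is proper iff `i_{r+1} ≠ m'` (its middle). -/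
def IsBest1 (π : Equiv.Perm (Fin n)) (r : ℕ) (i : Fin n) : Prop :=
  IsStaircase π 1 r i ∧
    ¬ (IsAlmost π 1 (r + 1) i ∧ iSeq π 1 i r ≠ iSeq π 1 i (r + 1))

/-! On a cycle `C` of `π`, the map `nextIn π E` permutes `E ∩ C` cyclically: every element of
`E ∩ C` returns to itself after exactly `|E ∩ C|` steps and no earlier. Hence an element of
`E_r ∩ C` survives to `E_{r+1}` only if `|E_r ∩ C| > b`, the minimum `m` of `C` survives as long
as this holds, and the maximum of `E_r ∩ C` never survives. So the levels shrink on `C` until the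
first `R` with `|E_R ∩ C| ≤ b`, and `m ∈ E_r` exactly for `r ≤ R`.

The descending half of a staircase lands in the levels automatically, so a best staircase of
size `r` from `i` is an ascending chain `i_1, …, i_{r+1}` with `i_k ∈ E_k` and
`|E_{r+1} ∩ C| ≤ b`. If its middle is `m`, then `r + 1 = R`. Since each `π_k^b` is a bijection of
`E_k ∩ C`, pulling `m` back through `π_{R-1}^b, …, π_1^b` gives exactly one such start `i`. -/

open Function Finset

section Cycle

variable {π : Equiv.Perm (Fin n)} {x y : Fin n}

lemma mem_cycleOfF_iff : y ∈ cycleOfF π x ↔ π.SameCycle x y := by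
  simp only [cycleOfF, mem_image, mem_range]
  constructor
  · rintro ⟨k, -, rfl⟩
    exact ⟨k, by rw [zpow_natCast, Equiv.Perm.iterate_eq_pow]⟩
  · intro h
    obtain ⟨k, rfl⟩ := h.exists_nat_pow_eq
    have hper : 0 < minimalPeriod π x :=
      IsPeriodicPt.minimalPeriod_pos (orderOf_pos π) <| by
        rw [IsPeriodicPt, IsFixedPt, Equiv.Perm.iterate_eq_pow, pow_orderOf_eq_one]; rfl
    refine ⟨k % minimalPeriod π x, ?_, iterate_mod_minimalPeriod_eq⟩
    exact (Nat.mod_lt _ hper).trans_le (by simpa using minimalPeriod_le_card (f := ⇑π) (x := x))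

lemma mem_cycleOfF_self : x ∈ cycleOfF π x :=
  mem_cycleOfF_iff.2 (.refl _ _)

lemma cycleOfF_eq_of_mem (h : y ∈ cycleOfF π x) : cycleOfF π y = cycleOfF π x := by
  ext z
  rw [mem_cycleOfF_iff, mem_cycleOfF_iff]
  exact ⟨(mem_cycleOfF_iff.1 h).trans, (mem_cycleOfF_iff.1 h).symm.trans⟩

lemma cycleOfF_inv : cycleOfF π⁻¹ x = cycleOfF π x := by
  ext z
  rw [mem_cycleOfF_iff, mem_cycleOfF_iff, Equiv.Perm.sameCycle_inv]

end Cycle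

section NextIn

variable {π : Equiv.Perm (Fin n)} {E : Finset (Fin n)} {x y z : Fin n}

lemma sameCycle_nextIn : π.SameCycle y (nextIn π E y) := by
  rw [nextIn]
  split
  · exact ⟨_, by rw [zpow_natCast, Equiv.Perm.iterate_eq_pow]⟩
  · exact .refl _ _

lemma sameCycle_iterate_nextIn (k : ℕ) : π.SameCycle y ((nextIn π E)^[k] y) := by
  induction k with
  | zero => exact .refl _ _
  | succ k ih => exact ih.trans (by rw [iterate_succ_apply']; exact sameCycle_nextIn)

lemma nextIn_mem (hz : z ∈ E) (h : π.SameCycle y z) : nextIn π E y ∈ E := by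
  obtain ⟨k, hk, -, hkz⟩ := h.exists_pow_eq''
  have hex : ∃ k, 0 < k ∧ (⇑π)^[k] y ∈ E :=
    ⟨k, hk, by rwa [Equiv.Perm.iterate_eq_pow, hkz]⟩
  rw [nextIn, dif_pos hex]
  exact (Nat.find_spec hex).2

lemma exists_iterate_nextIn_eq_iterate (hy : y ∈ E) (t : ℕ) (ht : (⇑π)^[t] y ∈ E) :
    ∃ j, (nextIn π E)^[j] y = (⇑π)^[t] y := by
  induction t using Nat.strong_induction_on generalizing y with
  | _ t ih =>
  rcases Nat.eq_zero_or_pos t with rfl | ht0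
  · exact ⟨0, rfl⟩
  have hex : ∃ k, 0 < k ∧ (⇑π)^[k] y ∈ E := ⟨t, ht0, ht⟩
  have hd : Nat.find hex ≤ t := Nat.find_min' hex ⟨ht0, ht⟩
  have hnext : nextIn π E y = (⇑π)^[Nat.find hex] y := by rw [nextIn, dif_pos hex]
  have hrest : (⇑π)^[t - Nat.find hex] (nextIn π E y) = (⇑π)^[t] y := by
    rw [hnext, ← iterate_add_apply, Nat.sub_add_cancel hd]
  obtain ⟨j, hj⟩ := ih (t - Nat.find hex) (by have := (Nat.find_spec hex).1; omega)
    (hnext ▸ (Nat.find_spec hex).2) (hrest ▸ ht)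
  exact ⟨j + 1, by rw [iterate_succ_apply, hj, hrest]⟩

lemma exists_iterate_nextIn_eq (hy : y ∈ E) (hz : z ∈ E) (h : π.SameCycle y z) :
    ∃ j, (nextIn π E)^[j] y = z := by
  obtain ⟨t, rfl⟩ := h.exists_nat_pow_eq
  exact exists_iterate_nextIn_eq_iterate hy t hz

lemma mapsTo_nextIn :
    Set.MapsTo (nextIn π E) ↑(E ∩ cycleOfF π x) ↑(E ∩ cycleOfF π x) := by
  intro y hy
  simp only [coe_inter, Set.mem_inter_iff, mem_coe] at hy ⊢
  exact ⟨nextIn_mem hy.1 (.refl _ _),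
    mem_cycleOfF_iff.2 ((mem_cycleOfF_iff.1 hy.2).trans sameCycle_nextIn)⟩

lemma minimalPeriod_nextIn (hy : y ∈ E ∩ cycleOfF π x) :
    minimalPeriod (nextIn π E) y = #(E ∩ cycleOfF π x) := by
  obtain ⟨hyE, hyC⟩ := mem_inter.1 hy
  rw [← cycleOfF_eq_of_mem hyC]
  replace hy : y ∈ E ∩ cycleOfF π y := mem_inter.2 ⟨hyE, mem_cycleOfF_self⟩
  obtain ⟨j, hj⟩ := exists_iterate_nextIn_eq (nextIn_mem hyE (.refl _ _)) hyE
    sameCycle_nextIn.symm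
  have hpos : 0 < minimalPeriod (nextIn π E) y :=
    IsPeriodicPt.minimalPeriod_pos j.succ_pos <| by
      rwa [IsPeriodicPt, IsFixedPt, iterate_succ_apply]
  have horbit : (range (minimalPeriod (nextIn π E) y)).image (fun j => (nextIn π E)^[j] y) =
      E ∩ cycleOfF π y := by
    ext z
    simp only [mem_image, mem_range]
    constructor
    · rintro ⟨j, -, rfl⟩
      exact mapsTo_nextIn.iterate j hy
    · intro hz
      obtain ⟨j, rfl⟩ :=
        exists_iterate_nextIn_eq hyE (mem_inter.1 hz).1 (mem_cycleOfF_iff.1 (mem_inter.1 hz).2)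
      exact ⟨j % _, Nat.mod_lt _ hpos, iterate_mod_minimalPeriod_eq⟩
  rw [← horbit, card_image_of_injOn (by rw [coe_range]; exact iterate_injOn_Iio_minimalPeriod),
    card_range]

lemma bijOn_nextIn : Set.BijOn (nextIn π E) ↑(E ∩ cycleOfF π x) ↑(E ∩ cycleOfF π x) := by
  refine ((Set.toFinite _).surjOn_iff_bijOn_of_mapsTo mapsTo_nextIn).1 fun y hy => ?_
  refine ⟨(nextIn π E)^[#(E ∩ cycleOfF π x) - 1] y, mapsTo_nextIn.iterate _ hy, ?_⟩
  rw [← iterate_succ_apply' (nextIn π E), Nat.succ_eq_add_one,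
    Nat.sub_add_cancel (card_pos.2 ⟨y, hy⟩), ← minimalPeriod_nextIn (mem_coe.1 hy), iterate_minimalPeriod]

lemma bijOn_stepB (b : ℕ) :
    Set.BijOn (stepB π b E) ↑(E ∩ cycleOfF π x) ↑(E ∩ cycleOfF π x) :=
  bijOn_nextIn.iterate b

lemma stepB_mem {b : ℕ} (hb : 1 ≤ b) (hz : z ∈ E) (h : π.SameCycle y z) :
    stepB π b E y ∈ E := by
  obtain ⟨b, rfl⟩ := Nat.exists_eq_add_of_le' hb
  rw [stepB, iterate_succ_apply']
  exact nextIn_mem hz ((sameCycle_iterate_nextIn b).symm.trans h)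

end NextIn

section Level

variable {π : Equiv.Perm (Fin n)} {b r : ℕ} {x m : Fin n}

lemma mem_level_succ_iff : m ∈ level π b (r + 1) ↔ m ∈ level π b r ∧
    (∀ k ∈ Icc 1 b, m < (nextIn π (level π b r))^[k] m) ∧
    (∀ k ∈ Icc 1 b, m < (nextIn π⁻¹ (level π b r))^[k] m) := by
  simp only [level, mem_filter]

lemma level_antitone : Antitone (level π b) :=
  antitone_nat_of_succ_le fun _ _ hm => (mem_level_succ_iff.1 hm).1

lemma lt_card_level_inter_of_mem_level_succ (h : m ∈ level π b (r + 1) ∩ cycleOfF π x) :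
    b < #(level π b r ∩ cycleOfF π x) := by
  obtain ⟨hm, hmC⟩ := mem_inter.1 h
  obtain ⟨hmr, hfwd, -⟩ := mem_level_succ_iff.1 hm
  have hmS : m ∈ level π b r ∩ cycleOfF π x := mem_inter.2 ⟨hmr, hmC⟩
  by_contra! hle
  have hback := iterate_minimalPeriod (f := nextIn π (level π b r)) (x := m)
  rw [minimalPeriod_nextIn hmS] at hback
  have := hfwd _ (mem_Icc.2 ⟨card_pos.2 ⟨m, hmS⟩, hle⟩)
  exact (this.trans_eq hback).false

lemma min_mem_level_succ (hmin : IsLeast (cycleOfF π x : Set (Fin n)) m)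
    (hm : m ∈ level π b r) (hcard : b < #(level π b r ∩ cycleOfF π x)) :
    m ∈ level π b (r + 1) := by
  have key : ∀ σ : Equiv.Perm (Fin n), cycleOfF σ x = cycleOfF π x →
      ∀ k ∈ Icc 1 b, m < (nextIn σ (level π b r))^[k] m := by
    intro σ hσ k hk
    have hmS : m ∈ level π b r ∩ cycleOfF σ x := mem_inter.2 ⟨hm, hσ ▸ hmin.1⟩
    refine lt_of_le_of_ne (hmin.2 ?_) fun heq => ?_
    · rw [← hσ]
      exact (mem_inter.1 (mapsTo_nextIn.iterate k hmS)).2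
    · have := IsPeriodicPt.minimalPeriod_le (mem_Icc.1 hk).1 heq.symm
      rw [minimalPeriod_nextIn hmS, hσ] at this
      have := (mem_Icc.1 hk).2
      omega
  exact mem_level_succ_iff.2 ⟨hm, key π rfl, key π⁻¹ cycleOfF_inv⟩

lemma card_level_succ_inter_lt (hb : 1 ≤ b) (h : (level π b r ∩ cycleOfF π x).Nonempty) :
    #(level π b (r + 1) ∩ cycleOfF π x) < #(level π b r ∩ cycleOfF π x) := by
  set S := level π b r ∩ cycleOfF π x
  have hM := S.max'_mem h
  refine card_lt_card ⟨inter_subset_inter (level_antitone r.le_succ) subset_rfl, fun hsub => ?_⟩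
  obtain ⟨-, hfwd, -⟩ := mem_level_succ_iff.1 (mem_inter.1 (hsub hM)).1
  exact (hfwd 1 (mem_Icc.2 ⟨le_rfl, hb⟩)).not_ge (S.le_max' _ (mapsTo_nextIn.iterate 1 hM))

lemma exists_card_level_inter_le (hb : 1 ≤ b) (π : Equiv.Perm (Fin n)) (x : Fin n) :
    ∃ r, #(level π b r ∩ cycleOfF π x) ≤ b := by
  by_contra! h
  have key : ∀ r, #(level π b r ∩ cycleOfF π x) + r ≤ n := by
    intro r
    induction r with
    | zero => simpa using card_le_univ (level π b 0 ∩ cycleOfF π x)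
    | succ r ih =>
      have := card_level_succ_inter_lt (r := r) (x := x) hb
        (card_pos.1 ((Nat.zero_le b).trans_lt (h r)))
      omega
  have := key (n + 1)
  omega

lemma mem_level_of_isLeast {R : ℕ} (hmin : IsLeast (cycleOfF π x : Set (Fin n)) m)
    (hR : ∀ r < R, b < #(level π b r ∩ cycleOfF π x)) : ∀ r ≤ R, m ∈ level π b r
  | 0, _ => mem_univ m
  | r + 1, hr => min_mem_level_succ hmin (mem_level_of_isLeast hmin hR r (by omega)) (hR r hr)

end Level

section Staircase

variable {π : Equiv.Perm (Fin n)} {b r : ℕ} {x i m : Fin n}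

lemma iSeq_mem_cycleOfF (hi : i ∈ cycleOfF π x) (k : ℕ) : iSeq π b i k ∈ cycleOfF π x := by
  induction k with
  | zero => exact hi
  | succ k ih =>
    exact mem_cycleOfF_iff.2 ((mem_cycleOfF_iff.1 ih).trans (sameCycle_iterate_nextIn b))

lemma sameCycle_jSeq (q : ℕ) : π.SameCycle m (jSeq π b r m q) := by
  induction q with
  | zero => exact .refl _ _
  | succ q ih => exact ih.trans (sameCycle_iterate_nextIn b)

lemma jSeq_succ_mem_level (hb : 1 ≤ b) {s q : ℕ} (hm : m ∈ level π b s)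
    (hs : r - (q + 1) ≤ s) :
    jSeq π b r m (q + 1) ∈ level π b (r - (q + 1)) :=
  stepB_mem hb (level_antitone hs hm) (sameCycle_jSeq q).symm

lemma isStaircase_of_forall_iSeq_mem (hb : 1 ≤ b)
    (h : ∀ k ≤ r, iSeq π b i k ∈ level π b k) :
    IsStaircase π b r i := by
  intro k hk
  refine ⟨h k hk, ?_⟩
  cases k with
  | zero => exact h r le_rfl
  | succ q => exact jSeq_succ_mem_level hb (h r le_rfl) (Nat.sub_le _ _)

lemma isAlmost_succ_of_forall_iSeq_mem (hb : 1 ≤ b)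
    (h : ∀ k ≤ r, iSeq π b i k ∈ level π b k) :
    IsAlmost π b (r + 1) i := by
  refine ⟨fun k hk => h k (Nat.lt_succ_iff.1 hk), fun q hq _ => ?_⟩
  obtain ⟨q, rfl⟩ := Nat.exists_eq_add_of_le' hq
  have hm : iSeq π b i (r + 1) ∈ level π b r := stepB_mem hb (h r le_rfl) (.refl _ _)
  exact jSeq_succ_mem_level hb hm (by omega)

lemma isBest_iff (hb : 1 ≤ b) (hi : i ∈ cycleOfF π x) : IsBest π b r i ↔
    (∀ k ≤ r, iSeq π b i k ∈ level π b k) ∧ #(level π b r ∩ cycleOfF π x) ≤ b := by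
  rw [IsBest, cycleOfF_eq_of_mem hi, not_and, not_lt]
  constructor
  · rintro ⟨hs, hbest⟩
    have h : ∀ k ≤ r, iSeq π b i k ∈ level π b k := fun k hk => (hs k hk).1
    exact ⟨h, hbest (isAlmost_succ_of_forall_iSeq_mem hb h)⟩
  · rintro ⟨h, hcard⟩
    exact ⟨isStaircase_of_forall_iSeq_mem hb h, fun _ => hcard⟩

lemma exists_iSeq_eq : ∀ {R : ℕ} {m : Fin n}, m ∈ level π b R ∩ cycleOfF π x →
    ∃ i ∈ cycleOfF π x, (∀ k ≤ R, iSeq π b i k ∈ level π b k) ∧ iSeq π b i R = m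
  | 0, m, hm => ⟨m, (mem_inter.1 hm).2,
      fun k hk => by obtain rfl := Nat.le_zero.1 hk; exact (mem_inter.1 hm).1, rfl⟩
  | R + 1, m, hm => by
    have hm' : m ∈ level π b R ∩ cycleOfF π x :=
      inter_subset_inter (level_antitone R.le_succ) subset_rfl hm
    obtain ⟨p, hp, hpm⟩ := (bijOn_stepB b).surjOn (mem_coe.2 hm')
    obtain ⟨i, hi, hlev, hiR⟩ := exists_iSeq_eq (mem_coe.1 hp)
    have hiR' : iSeq π b i (R + 1) = m := by rw [iSeq, hiR, hpm]
    refine ⟨i, hi, fun k hk => ?_, hiR'⟩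
    rcases Nat.lt_or_eq_of_le hk with hk | rfl
    · exact hlev k (by omega)
    · exact hiR' ▸ (mem_inter.1 hm).1

lemma eq_of_iSeq_eq {i' : Fin n} (hi : i ∈ cycleOfF π x) (hi' : i' ∈ cycleOfF π x) :
    ∀ {R : ℕ}, (∀ k ≤ R, iSeq π b i k ∈ level π b k) →
      (∀ k ≤ R, iSeq π b i' k ∈ level π b k) → iSeq π b i R = iSeq π b i' R → i = i'
  | 0, _, _, h => h
  | R + 1, h, h', heq =>
    eq_of_iSeq_eq hi hi' (fun k hk => h k (by omega)) (fun k hk => h' k (by omega)) <|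
      (bijOn_stepB b).injOn (mem_inter.2 ⟨h R (by omega), iSeq_mem_cycleOfF hi R⟩)
        (mem_inter.2 ⟨h' R (by omega), iSeq_mem_cycleOfF hi' R⟩) heq

end Staircase

/-- On every cycle `C` of `π` there is exactly one leader: exactly one
element `i ∈ C` such that the best `b`-staircase from `i` exists and its middle
(`iSeq π b i r`) is the minimum element of `C`. -/
theorem exists_unique_leader (n b : ℕ) (hb : 1 ≤ b) (π : Equiv.Perm (Fin n))
    (x : Fin n) (C : Finset (Fin n)) (hC : C = cycleOfF π x) :
    ∃! i : Fin n, i ∈ C ∧ ∃ r, IsBest π b r i ∧ ∀ y ∈ C, iSeq π b i r ≤ y := by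
  subst hC
  obtain ⟨m, hm⟩ : ∃ m, IsLeast (cycleOfF π x : Set (Fin n)) m :=
    ⟨_, isLeast_min' _ ⟨x, mem_cycleOfF_self⟩⟩
  have hsmall := exists_card_level_inter_le hb π x
  set R := Nat.find hsmall
  have hR : #(level π b R ∩ cycleOfF π x) ≤ b := Nat.find_spec hsmall
  have hmR : m ∈ level π b R :=
    mem_level_of_isLeast hm (fun r hr => not_le.1 (Nat.find_min hsmall hr)) R le_rfl
  obtain ⟨i, hiC, hi, hiR⟩ := exists_iSeq_eq (mem_inter.2 ⟨hmR, hm.1⟩)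
  refine ⟨i, ⟨hiC, R, (isBest_iff hb hiC).2 ⟨hi, hR⟩, hiR ▸ fun y hy => hm.2 hy⟩, ?_⟩
  rintro j ⟨hjC, r, hbest, hjmin⟩
  obtain ⟨hj, hr⟩ := (isBest_iff hb hjC).1 hbest
  have hjm : iSeq π b j r = m := le_antisymm (hjmin m hm.1) (hm.2 (iSeq_mem_cycleOfF hjC r))
  have hrR : r = R := by
    refine le_antisymm (not_lt.1 fun hRr => ?_) (Nat.find_min' hsmall hr)
    have hmC : m ∈ level π b (R + 1) ∩ cycleOfF π x :=
      mem_inter.2 ⟨level_antitone hRr (hjm ▸ hj r le_rfl), hm.1⟩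
    exact (lt_card_level_inter_of_mem_level_succ hmC).not_ge hR
  subst hrR
  exact eq_of_iSeq_eq hjC hiC hj hi (hjm.trans hiR.symm)
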